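/- For all positive integers s ≥ 2 with s ≠ 3, and all positive integers h with l(h) ≥ 2, the strict inequality s·l(h) − l(s·h) > ⌊(s+1)/2⌋ holds. -/

import Mathlib

noncomputable def ell (g : ℕ) : ℕ :=
  sInf {k | ∃ a n : Fin k → ℕ, (∀ i, a i = 1 ∨ a i = 3) ∧ g = ∑ i, a i * 2 ^ n i}

noncomputable def obj (g : ℕ) : ℕ := g - ell g

/-!
Splitting `s` into its binary digits, `s * h` is a sum of `(Nat.digits 2 s).sum` numbers of the
form `2 ^ j * h`, each of which inherits a representation of length `ell h` from `h`. Hence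
`ell (s * h) ≤ σ₂(s) * ell h`, with `σ₂` the binary digit sum, and so
`s * ell h - ell (s * h) ≥ (s - σ₂(s)) * ell h ≥ 2 * (s - σ₂(s))`. The binary digit sum grows
slowly enough that `2 * (s - σ₂(s))` exceeds `(s + 1) / 2` for every `s ≥ 2` except `s = 3`.
-/

lemma ell_spec (g : ℕ) :
    ∃ a n : Fin (ell g) → ℕ, (∀ i, a i = 1 ∨ a i = 3) ∧ g = ∑ i, a i * 2 ^ n i :=
  Nat.sInf_mem (s := {k | ∃ a n : Fin k → ℕ, (∀ i, a i = 1 ∨ a i = 3) ∧ g = ∑ i, a i * 2 ^ n i})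
    ⟨g, fun _ => 1, fun _ => 0, fun _ => Or.inl rfl, by simp⟩

lemma ell_le {g k : ℕ} (a n : Fin k → ℕ) (ha : ∀ i, a i = 1 ∨ a i = 3)
    (hg : g = ∑ i, a i * 2 ^ n i) : ell g ≤ k :=
  Nat.sInf_le ⟨a, n, ha, hg⟩

lemma ell_zero : ell 0 = 0 :=
  Nat.le_zero.mp (ell_le (k := 0) Fin.elim0 Fin.elim0 (fun i => i.elim0) (by simp))

lemma ell_two_mul_le (g : ℕ) : ell (2 * g) ≤ ell g := by
  obtain ⟨a, n, ha, hg⟩ := ell_spec g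
  refine ell_le a (fun i => n i + 1) ha ?_
  conv_lhs => rw [hg, Finset.mul_sum]
  exact Finset.sum_congr rfl fun i _ => by ring

lemma ell_add_le (x y : ℕ) : ell (x + y) ≤ ell x + ell y := by
  obtain ⟨a₁, n₁, ha₁, hx⟩ := ell_spec x
  obtain ⟨a₂, n₂, ha₂, hy⟩ := ell_spec y
  refine ell_le (Fin.append a₁ a₂) (Fin.append n₁ n₂) (Fin.addCases ?_ ?_) ?_
  · conv_lhs => rw [hx, hy]
    simp [Fin.sum_univ_add]
  · simpa using ha₁
  · simpa using ha₂

lemma ell_mul_le_digits_sum_mul (s h : ℕ) : ell (s * h) ≤ (Nat.digits 2 s).sum * ell h := by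
  induction s using Nat.strong_induction_on with
  | _ s ih =>
    rcases Nat.eq_zero_or_pos s with rfl | hs
    · simp [ell_zero]
    have hlow : ell (s % 2 * h) ≤ s % 2 * ell h := by
      rcases Nat.mod_two_eq_zero_or_one s with hm | hm <;> simp [hm, ell_zero]
    have hhigh : ell (2 * (s / 2 * h)) ≤ (Nat.digits 2 (s / 2)).sum * ell h :=
      (ell_two_mul_le _).trans (ih _ (Nat.div_lt_self hs one_lt_two))
    calc ell (s * h) = ell (s % 2 * h + 2 * (s / 2 * h)) := by
          rw [← mul_assoc, ← add_mul, Nat.mod_add_div]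
      _ ≤ s % 2 * ell h + (Nat.digits 2 (s / 2)).sum * ell h :=
          (ell_add_le _ _).trans (add_le_add hlow hhigh)
      _ = (Nat.digits 2 s).sum * ell h := by
          rw [Nat.digits_def' one_lt_two hs, List.sum_cons, add_mul]

lemma four_mul_digits_two_sum_add_three_le {s : ℕ} (hs : 4 ≤ s) :
    4 * (Nat.digits 2 s).sum + 3 ≤ 3 * s := by
  induction s using Nat.strong_induction_on with
  | _ s ih =>
    rcases Nat.lt_or_ge s 8 with h8 | h8
    · interval_cases s <;> simp
    · have := ih (s / 2) (by omega) (by omega)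
      rw [Nat.digits_def' one_lt_two (by omega), List.sum_cons]
      omega

lemma half_lt_two_mul_sub_digits_two_sum {s : ℕ} (hs : 2 ≤ s) (hs3 : s ≠ 3) :
    (s + 1) / 2 < 2 * (s - (Nat.digits 2 s).sum) := by
  rcases Nat.lt_or_ge s 4 with h4 | h4
  · obtain rfl : s = 2 := by omega
    simp
  · have := four_mul_digits_two_sum_add_three_le h4
    omega

theorem stmt18_general (s h : ℕ) (hs : 2 ≤ s) (hs3 : s ≠ 3) (hlh : 2 ≤ ell h) :
    s * ell h - ell (s * h) > (s + 1) / 2 := by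
  set σ := (Nat.digits 2 s).sum
  have hσ : σ ≤ s := Nat.digit_sum_le 2 s
  have hmul : ell (s * h) ≤ σ * ell h := ell_mul_le_digits_sum_mul s h
  have hgap : (s - σ) * 2 ≤ (s - σ) * ell h := Nat.mul_le_mul_left _ hlh
  have hsplit : s * ell h = σ * ell h + (s - σ) * ell h := by
    rw [← add_mul, Nat.add_sub_cancel' hσ]
  have := half_lt_two_mul_sub_digits_two_sum hs hs3
  omega

theorem stmt18 (s h : ℕ) (hs : 2 ≤ s) (hs3 : s ≠ 3) (hh : 0 < h) (hlh : 2 ≤ ell h) :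
    s * ell h - ell (s * h) > (s + 1) / 2 :=
  stmt18_general s h hs hs3 hlh
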